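/- arXiv:gr-qc/0505071 — 2 statements merged into one kernel-verified Lean document; each statement's English description precedes it below -/
import Mathlib

section
/- Let n ≥ 1, let ũ₁,…,ũₙ : ℝ → SO⁺(2,1) and x̃₁,…,x̃ₙ : ℝ → ℝ³ be differentiable one-parameter families, and set Uᵢ = ũᵢ·ũᵢ₋₁···ũ₁ (U₀ = 1), gᵢ = Uᵢ⁻¹ = ũ₁⁻¹ũ₂⁻¹···ũᵢ⁻¹ for i = 1,…,n−1, and zᵢ = x̃ᵢ₊₁ − x̃ᵢ for i = 1,…,n−1. Then at every parameter value: Σᵢ₌₁ⁿ η( m( U′ᵢ₋₁Uᵢ₋₁⁻¹ − U′ᵢUᵢ⁻¹ ), x̃ᵢ ) = −Σᵢ₌₁^{n−1} η( m( gᵢ⁻¹g′ᵢ ), zᵢ ) − η( m( (ũₙgₙ₋₁⁻¹)′ · gₙ₋₁ũₙ⁻¹ ), x̃ₙ ), where primes denote derivatives with respect to the parameter. (Part 2 of Lemma 6.1: the change of variables (6.5)–(6.6) brings the one-form Θ to the form (6.7).) -/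
open Matrix

noncomputable section

attribute [local instance] Matrix.normedAddCommGroup Matrix.normedSpace

/-- The Minkowski metric matrix diag(1,-1,-1). -/
def η3 : Matrix (Fin 3) (Fin 3) ℝ := Matrix.diagonal ![1, -1, -1]

/-- The Minkowski bilinear form on ℝ³. -/
def mink (x y : Fin 3 → ℝ) : ℝ := x 0 * y 0 - x 1 * y 1 - x 2 * y 2

/-- The Minkowski cross product. -/
def crossM (p q : Fin 3 → ℝ) : Fin 3 → ℝ :=
  ![p 1 * q 2 - p 2 * q 1, p 0 * q 2 - p 2 * q 0, p 1 * q 0 - p 0 * q 1]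

/-- The map M : ℝ³ → so(2,1), M(p)q = p ×_η q. -/
def Mmap (p : Fin 3 → ℝ) : Matrix (Fin 3) (Fin 3) ℝ :=
  !![0, -(p 2), p 1; -(p 2), 0, p 0; p 1, -(p 0), 0]

/-- The inverse m : so(2,1) → ℝ³ of M (extracted entrywise). -/
def mser (X : Matrix (Fin 3) (Fin 3) ℝ) : Fin 3 → ℝ := ![X 1 2, X 0 2, -(X 0 1)]

/-- Membership in SO⁺(2,1). -/
def IsSOplus (v : Matrix (Fin 3) (Fin 3) ℝ) : Prop :=
  vᵀ * η3 * v = η3 ∧ v.det = 1 ∧ 0 < v 0 0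

/-- so(2,1) as a set of 3×3 matrices. -/
def IsSO21 (X : Matrix (Fin 3) (Fin 3) ℝ) : Prop := Xᵀ * η3 + η3 * X = 0

/-- The 4×4 Poincaré matrix [[v,x],[0,1]]. -/
def pmat (v : Matrix (Fin 3) (Fin 3) ℝ) (x : Fin 3 → ℝ) : Matrix (Fin 4) (Fin 4) ℝ :=
  Matrix.of fun i j =>
    if hi : (i : ℕ) < 3 then
      if hj : (j : ℕ) < 3 then v ⟨i, hi⟩ ⟨j, hj⟩ else x ⟨i, hi⟩
    else if (j : ℕ) < 3 then 0 else 1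

/-- The 4×4 iso(2,1) matrix [[X,b],[0,0]]. -/
def amat (X : Matrix (Fin 3) (Fin 3) ℝ) (b : Fin 3 → ℝ) : Matrix (Fin 4) (Fin 4) ℝ :=
  Matrix.of fun i j =>
    if hi : (i : ℕ) < 3 then
      if hj : (j : ℕ) < 3 then X ⟨i, hi⟩ ⟨j, hj⟩ else b ⟨i, hi⟩
    else 0

/-- Membership in the Poincaré group ISO⁺(2,1) ⊂ GL₄(ℝ). -/
def IsISO (g : Matrix (Fin 4) (Fin 4) ℝ) : Prop :=
  ∃ v x, IsSOplus v ∧ g = pmat v x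

/-- Membership in the Lie algebra iso(2,1). -/
def IsISOAlg (ξ : Matrix (Fin 4) (Fin 4) ℝ) : Prop :=
  ∃ X b, IsSO21 X ∧ ξ = amat X b

/-- Standard basis vectors of ℝ³. -/
def e3 (a : Fin 3) : Fin 3 → ℝ := Pi.single a 1

/-- The rotation/boost generators Ĵ_a of iso(2,1). -/
def Jhat (a : Fin 3) : Matrix (Fin 4) (Fin 4) ℝ := amat (Mmap (e3 a)) 0

/-- The translation generators P̂_a of iso(2,1). -/
def Phat (a : Fin 3) : Matrix (Fin 4) (Fin 4) ℝ := amat 0 (e3 a)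

/-- The invariant pairing ⟨[[X,b],0],[[Y,c],0]⟩ = η(m X, c) + η(m Y, b) on iso(2,1). -/
def pairIso (ξ ζ : Matrix (Fin 4) (Fin 4) ℝ) : ℝ :=
  mink ![ξ 1 2, ξ 0 2, -(ξ 0 1)] ![ζ 0 3, ζ 1 3, ζ 2 3]
  + mink ![ζ 1 2, ζ 0 2, -(ζ 0 1)] ![ξ 0 3, ξ 1 3, ξ 2 3]

/-- Ordered product U_k(ε) = u_{k-1}(ε)⋯u_0(ε) (with U_0 = 1). -/
def ordProd {n : ℕ} (u : ℕ → ℝ → Matrix (Fin n) (Fin n) ℝ) : ℕ → ℝ → Matrix (Fin n) (Fin n) ℝ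
  | 0 => fun _ => 1
  | k + 1 => fun ε => u k ε * ordProd u k ε

/-! With `U k = ordProd u k` and `A k = U k' (U k)⁻¹` its right logarithmic derivative,
differentiating `U k * (U k)⁻¹ = 1` gives `(g k)⁻¹ g k' = -A k`, and `u (n-1) (g (n-1))⁻¹ = U n`.
So every term on both sides is a pairing `η(m(A i), x j)`, and as `m` and `η` are linear the
identity is summation by parts; the boundary term `η(m(A 0), x 0)` vanishes since `U 0 = 1`. -/

section MatrixCalculus

variable {𝕜 : Type*} [NontriviallyNormedField 𝕜] {ι κ ν : Type*} [Fintype κ] [Fintype ν]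

theorem differentiableAt_matrix_iff {f : 𝕜 → Matrix ι κ 𝕜} {t : 𝕜} :
    DifferentiableAt 𝕜 f t ↔ ∀ i j, DifferentiableAt 𝕜 (fun s => f s i j) t :=
  differentiableAt_pi.trans (forall_congr' fun _ => differentiableAt_pi)

theorem HasDerivAt.matrix_mul {f : 𝕜 → Matrix ι κ 𝕜} {g : 𝕜 → Matrix κ ν 𝕜}
    {f' : Matrix ι κ 𝕜} {g' : Matrix κ ν 𝕜} {t : 𝕜}
    (hf : HasDerivAt f f' t) (hg : HasDerivAt g g' t) :
    HasDerivAt (fun s => f s * g s) (f' * g t + f t * g') t := by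
  refine hasDerivAt_pi.mpr fun i => hasDerivAt_pi.mpr fun j => ?_
  have hfi k := hasDerivAt_pi.mp (hasDerivAt_pi.mp hf i) k
  have hgj k := hasDerivAt_pi.mp (hasDerivAt_pi.mp hg k) j
  simpa only [Matrix.mul_apply, Matrix.add_apply, Pi.mul_apply, ← Finset.sum_add_distrib] using
    HasDerivAt.fun_sum fun k _ => (hfi k).mul (hgj k)

variable [Fintype ι]

theorem Differentiable.matrix_mul {f : 𝕜 → Matrix ι κ 𝕜} {g : 𝕜 → Matrix κ ν 𝕜}
    (hf : Differentiable 𝕜 f) (hg : Differentiable 𝕜 g) :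
    Differentiable 𝕜 (fun s => f s * g s) := fun t =>
  ((hf t).hasDerivAt.matrix_mul (hg t).hasDerivAt).differentiableAt

variable [DecidableEq ι] {f : 𝕜 → Matrix ι ι 𝕜} {t : 𝕜}

theorem DifferentiableAt.matrix_det (hf : DifferentiableAt 𝕜 f t) :
    DifferentiableAt 𝕜 (fun s => (f s).det) t := by
  simp only [Matrix.det_apply']
  exact DifferentiableAt.fun_sum fun σ _ =>
    (DifferentiableAt.fun_finsetProd fun i _ => differentiableAt_matrix_iff.mp hf _ _).const_mul _

theorem DifferentiableAt.matrix_adjugate (hf : DifferentiableAt 𝕜 f t) :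
    DifferentiableAt 𝕜 (fun s => (f s).adjugate) t := by
  refine differentiableAt_matrix_iff.mpr fun i j => ?_
  simp only [Matrix.adjugate_apply]
  refine DifferentiableAt.matrix_det (differentiableAt_matrix_iff.mpr fun k l => ?_)
  by_cases hk : k = j
  · simpa only [Matrix.updateRow_apply, hk, if_true] using differentiableAt_const _
  · simpa only [Matrix.updateRow_apply, hk, if_false] using differentiableAt_matrix_iff.mp hf k l

theorem DifferentiableAt.matrix_inv (hf : DifferentiableAt 𝕜 f t) (hdet : IsUnit (f t).det) :
    DifferentiableAt 𝕜 (fun s => (f s)⁻¹) t := by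
  simp only [Matrix.inv_def, Ring.inverse_eq_inv']
  exact (hf.matrix_det.inv hdet.ne_zero).smul hf.matrix_adjugate

def rightLogDeriv (f : 𝕜 → Matrix ι ι 𝕜) (t : 𝕜) : Matrix ι ι 𝕜 := deriv f t * (f t)⁻¹

theorem rightLogDeriv_const (c : Matrix ι ι 𝕜) (t : 𝕜) : rightLogDeriv (fun _ => c) t = 0 := by
  -- a bare `rw [deriv_const]` does not match: the local matrix norm instances differ syntactically
  rw [rightLogDeriv, show deriv (fun _ => c) t = 0 from deriv_const t c, zero_mul]

theorem mul_deriv_inv_eq_neg_rightLogDeriv (hf : Differentiable 𝕜 f)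
    (hdet : ∀ s, IsUnit (f s).det) (t : 𝕜) :
    f t * deriv (fun s => (f s)⁻¹) t = -rightLogDeriv f t := by
  have hprod := (hf t).hasDerivAt.matrix_mul ((hf t).matrix_inv (hdet t)).hasDerivAt
  have hone : (fun s => f s * (f s)⁻¹) = fun _ => 1 :=
    funext fun s => Matrix.mul_nonsing_inv _ (hdet s)
  rw [hone] at hprod
  rw [rightLogDeriv, eq_neg_iff_add_eq_zero, add_comm]
  exact hprod.unique (hasDerivAt_const t 1)

end MatrixCalculus

section OrderedProduct

variable {n : ℕ} {u : ℕ → ℝ → Matrix (Fin n) (Fin n) ℝ}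

theorem ordProd_succ (k : ℕ) (t : ℝ) : ordProd u (k + 1) t = u k t * ordProd u k t := rfl

theorem isUnit_det_ordProd {k : ℕ} {t : ℝ} (hu : ∀ i < k, IsUnit (u i t).det) :
    IsUnit (ordProd u k t).det := by
  induction k with
  | zero => simp [ordProd]
  | succ k ih =>
    rw [ordProd_succ, Matrix.det_mul]
    exact (hu k k.lt_succ_self).mul (ih fun i hi => hu i (hi.trans k.lt_succ_self))

theorem differentiable_ordProd {k : ℕ} (hu : ∀ i < k, Differentiable ℝ (u i)) :
    Differentiable ℝ (ordProd u k) := by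
  induction k with
  | zero => exact differentiable_const _
  | succ k ih =>
    exact (hu k k.lt_succ_self).matrix_mul (ih fun i hi => hu i (hi.trans k.lt_succ_self))

end OrderedProduct

theorem sum_range_succ_diag_sub_subdiag {G : Type*} [AddCommGroup G] (T : ℕ → ℕ → G) (m : ℕ) :
    ∑ i ∈ Finset.range (m + 1), (T i i - T (i + 1) i)
      = T 0 0 + ∑ i ∈ Finset.range m, (T (i + 1) (i + 1) - T (i + 1) i) - T (m + 1) m := by
  rw [Finset.sum_sub_distrib, Finset.sum_sub_distrib, Finset.sum_range_succ' (fun i => T i i),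
    Finset.sum_range_succ (fun i => T (i + 1) i)]
  abel

theorem mser_sub (X Y : Matrix (Fin 3) (Fin 3) ℝ) : mser (X - Y) = mser X - mser Y := by
  ext i; fin_cases i <;> simp [mser]; ring

theorem mser_neg (X : Matrix (Fin 3) (Fin 3) ℝ) : mser (-X) = -mser X := by
  ext i; fin_cases i <;> simp [mser]

theorem mink_sub_left (x y w : Fin 3 → ℝ) : mink (x - y) w = mink x w - mink y w := by
  simp only [mink, Pi.sub_apply]; ring

theorem mink_sub_right (w x y : Fin 3 → ℝ) : mink w (x - y) = mink w x - mink w y := by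
  simp only [mink, Pi.sub_apply]; ring

theorem mink_neg_left (x w : Fin 3 → ℝ) : mink (-x) w = -mink x w := by
  simp only [mink, Pi.neg_apply]; ring

theorem statement1_general (n : ℕ) (hn : 1 ≤ n)
    (u : ℕ → ℝ → Matrix (Fin 3) (Fin 3) ℝ) (x : ℕ → ℝ → (Fin 3 → ℝ))
    (hu : ∀ i < n, Differentiable ℝ (u i))
    (huSO : ∀ i < n, ∀ ε, IsSOplus (u i ε))
    (g : ℕ → ℝ → Matrix (Fin 3) (Fin 3) ℝ)
    (hg : ∀ i ε, g i ε = (ordProd u i ε)⁻¹)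
    (z : ℕ → ℝ → (Fin 3 → ℝ))
    (hz : ∀ i ε, z i ε = x (i + 1) ε - x i ε)
    (ε : ℝ) :
    ∑ i ∈ Finset.range n,
      mink (mser (deriv (ordProd u i) ε * (ordProd u i ε)⁻¹
        - deriv (ordProd u (i + 1)) ε * (ordProd u (i + 1) ε)⁻¹)) (x i ε)
    = -(∑ i ∈ Finset.range (n - 1),
        mink (mser ((g (i + 1) ε)⁻¹ * deriv (g (i + 1)) ε)) (z i ε))
      - mink (mser (deriv (fun ε' => u (n - 1) ε' * (g (n - 1) ε')⁻¹) ε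
          * (g (n - 1) ε * (u (n - 1) ε)⁻¹))) (x (n - 1) ε) := by
  obtain ⟨m, rfl⟩ : ∃ m, n = m + 1 := ⟨n - 1, by omega⟩
  simp only [Nat.add_sub_cancel]
  have hunit : ∀ k ≤ m + 1, ∀ t, IsUnit (ordProd u k t).det := fun k hk t =>
    isUnit_det_ordProd fun i hi => by simp [(huSO i (by omega) t).2.1]
  have hdiff : ∀ k ≤ m + 1, Differentiable ℝ (ordProd u k) := fun k hk =>
    differentiable_ordProd fun i hi => hu i (by omega)
  have hg_rightLogDeriv : ∀ k ≤ m + 1,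
      (g k ε)⁻¹ * deriv (g k) ε = -rightLogDeriv (ordProd u k) ε := by
    intro k hk
    rw [show g k = fun t => (ordProd u k t)⁻¹ from funext (hg k),
      Matrix.nonsing_inv_nonsing_inv _ (hunit k hk ε)]
    exact mul_deriv_inv_eq_neg_rightLogDeriv (hdiff k hk) (hunit k hk) ε
  have hlast : (fun t => u m t * (g m t)⁻¹) = ordProd u (m + 1) := funext fun t => by
    rw [hg, Matrix.nonsing_inv_nonsing_inv _ (hunit m (by omega) t), ordProd_succ]
  have hlast_inv : g m ε * (u m ε)⁻¹ = (ordProd u (m + 1) ε)⁻¹ := by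
    rw [hg, ordProd_succ, Matrix.mul_inv_rev]
  set T : ℕ → ℕ → ℝ := fun i j => mink (mser (rightLogDeriv (ordProd u i) ε)) (x j ε)
  have hT00 : T 0 0 = 0 := by
    simp only [T]
    rw [show ordProd u 0 = fun _ => 1 from rfl, rightLogDeriv_const]
    simp [mser, mink]
  have hsum : ∀ i ∈ Finset.range m, mink (mser ((g (i + 1) ε)⁻¹ * deriv (g (i + 1)) ε)) (z i ε)
      = -(T (i + 1) (i + 1) - T (i + 1) i) := fun i hi => by
    rw [hg_rightLogDeriv (i + 1) (by rw [Finset.mem_range] at hi; omega), hz, mser_neg, mink_neg_left,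
      mink_sub_right]
  calc _ = ∑ i ∈ Finset.range (m + 1), (T i i - T (i + 1) i) := by
        simp only [mser_sub, mink_sub_left]; rfl
    _ = _ := by
      rw [sum_range_succ_diag_sub_subdiag, hT00, Finset.sum_congr rfl hsum, hlast, hlast_inv,
        Finset.sum_neg_distrib, zero_add, neg_neg]
      rfl

/-- Lemma 6.1, part 2: the change of variables (6.5)–(6.6) brings the
one-form Θ to the form (6.7). -/
theorem statement1 (n : ℕ) (hn : 1 ≤ n)
    (u : ℕ → ℝ → Matrix (Fin 3) (Fin 3) ℝ) (x : ℕ → ℝ → (Fin 3 → ℝ))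
    (hu : ∀ i < n, Differentiable ℝ (u i))
    (huSO : ∀ i < n, ∀ ε, IsSOplus (u i ε))
    (hx : ∀ i < n, Differentiable ℝ (x i))
    (g : ℕ → ℝ → Matrix (Fin 3) (Fin 3) ℝ)
    (hg : ∀ i ε, g i ε = (ordProd u i ε)⁻¹)
    (z : ℕ → ℝ → (Fin 3 → ℝ))
    (hz : ∀ i ε, z i ε = x (i + 1) ε - x i ε)
    (ε : ℝ) :
    ∑ i ∈ Finset.range n,
      mink (mser (deriv (ordProd u i) ε * (ordProd u i ε)⁻¹
        - deriv (ordProd u (i + 1)) ε * (ordProd u (i + 1) ε)⁻¹)) (x i ε)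
    = -(∑ i ∈ Finset.range (n - 1),
        mink (mser ((g (i + 1) ε)⁻¹ * deriv (g (i + 1)) ε)) (z i ε))
      - mink (mser (deriv (fun ε' => u (n - 1) ε' * (g (n - 1) ε')⁻¹) ε
          * (g (n - 1) ε * (u (n - 1) ε)⁻¹))) (x (n - 1) ε) :=
  statement1_general n hn u x hu huSO g hg z hz ε
end
end

section
/- Let v ∈ SO⁺(2,1), x ∈ ℝ³, μ, s ∈ ℝ, set h = [[v, x],[0,1]] ∈ ISO⁺(2,1), p = μ·v·e₀ and k = x ×_η p + s·v·e₀. Then h·(μĴ₀ + sP̂₀)·h⁻¹ = [[M(p), k],[0,0]]; moreover η(p,p) = μ² and η(p,k) = μs. (Equations (3.17)–(3.19): the coadjoint-orbit element T = h(μJ₀ + sP₀)h⁻¹ = k_aP^a + p^aJ_a of a particle of mass μ and spin s has momentum p⃗ = μ Ad(v)J₀ and angular momentum k⃗ = x⃗ ∧ p⃗ + s p̂, satisfying the mass constraint p_ap^a = μ² and the spin constraint p_ak^a = μs.) -/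
open Matrix

noncomputable section

attribute [local instance] Matrix.normedAddCommGroup Matrix.normedSpace

/-! Conjugation by `[[v, x], [0, 1]]` sends `[[X, b], [0, 0]]` to
`[[v X v⁻¹, v b - (v X v⁻¹) x], [0, 0]]`. For `v ∈ SO⁺(2,1)` we have `v⁻¹ = η vᵀ η`, and
`v M(q) v⁻¹ = M(v q)`: the Minkowski cross product is `η` applied to the Euclidean one, and the
cofactor identity `Aᵀ (A p × A q) = det A • (p × q)` shows that an `η`-isometry of determinant one
preserves `×_η`. The mass and spin constraints then follow from the invariance of `η` under `v`
and from `η(p, x ×_η p) = 0`. -/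

lemma η3_mul_self : η3 * η3 = 1 := by
  ext i j
  fin_cases i <;> fin_cases j <;> simp [η3, Matrix.mul_apply, Fin.sum_univ_three]

lemma transpose_mulVec_cross_mulVec {R : Type*} [CommRing R] (A : Matrix (Fin 3) (Fin 3) R)
    (p q : Fin 3 → R) : Aᵀ *ᵥ ((A *ᵥ p) ⨯₃ (A *ᵥ q)) = A.det • (p ⨯₃ q) := by
  ext i
  fin_cases i <;>
    simp [cross_apply, Matrix.det_fin_three, Matrix.mulVec, dotProduct, Fin.sum_univ_three] <;>
    ring

lemma crossM_eq_η3_mulVec_cross (p q : Fin 3 → ℝ) : crossM p q = η3 *ᵥ (p ⨯₃ q) := by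
  ext i
  fin_cases i <;> simp [crossM, cross_apply, η3, mulVec_diagonal]

lemma crossM_anticomm (p q : Fin 3 → ℝ) : -crossM p q = crossM q p := by
  rw [crossM_eq_η3_mulVec_cross, crossM_eq_η3_mulVec_cross, ← mulVec_neg, cross_anticomm]

lemma Mmap_smul (c : ℝ) (p : Fin 3 → ℝ) : Mmap (c • p) = c • Mmap p := by
  ext i j
  fin_cases i <;> fin_cases j <;> simp [Mmap]

lemma Mmap_mulVec (p q : Fin 3 → ℝ) : Mmap p *ᵥ q = crossM p q := by
  ext i
  fin_cases i <;> simp [Mmap, crossM, Matrix.mulVec, dotProduct, Fin.sum_univ_three] <;> ring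

lemma mink_eq_dotProduct (x y : Fin 3 → ℝ) : mink x y = x ⬝ᵥ η3 *ᵥ y := by
  simp [mink, η3, mulVec_diagonal, dotProduct, Fin.sum_univ_three]
  ring

lemma mink_smul_left (c : ℝ) (x y : Fin 3 → ℝ) : mink (c • x) y = c * mink x y := by
  simp only [mink, Pi.smul_apply, smul_eq_mul]
  ring

lemma mink_smul_right (c : ℝ) (x y : Fin 3 → ℝ) : mink x (c • y) = c * mink x y := by
  simp only [mink, Pi.smul_apply, smul_eq_mul]
  ring

lemma mink_add_right (x y z : Fin 3 → ℝ) : mink x (y + z) = mink x y + mink x z := by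
  simp only [mink, Pi.add_apply]
  ring

lemma mink_crossM_self (x p : Fin 3 → ℝ) : mink p (crossM x p) = 0 := by
  simp [mink, crossM]
  ring

lemma mink_e3_zero : mink (e3 0) (e3 0) = 1 := by
  simp [mink, e3]

section Isometry

variable {v : Matrix (Fin 3) (Fin 3) ℝ} (hv : vᵀ * η3 * v = η3)
include hv

lemma mul_η3_transpose_η3_of_isometry : v * (η3 * vᵀ * η3) = 1 := by
  refine mul_eq_one_comm.mp ?_
  rw [Matrix.mul_assoc, Matrix.mul_assoc, ← Matrix.mul_assoc vᵀ, hv, η3_mul_self]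

lemma mul_η3_mul_transpose_of_isometry : v * η3 * vᵀ = η3 := by
  simpa [Matrix.mul_assoc, η3_mul_self] using
    congrArg (· * η3) (mul_η3_transpose_η3_of_isometry hv)

lemma mink_mulVec_of_isometry (x y : Fin 3 → ℝ) : mink (v *ᵥ x) (v *ᵥ y) = mink x y := by
  rw [mink_eq_dotProduct, mink_eq_dotProduct]
  conv_rhs => rw [← hv, ← mulVec_mulVec, ← mulVec_mulVec, dotProduct_mulVec, vecMul_transpose]

variable (hdet : v.det = 1)
include hdet

lemma mulVec_crossM_of_isometry (p q : Fin 3 → ℝ) :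
    v *ᵥ crossM p q = crossM (v *ᵥ p) (v *ᵥ q) := by
  have hcross := transpose_mulVec_cross_mulVec v p q
  rw [hdet, one_smul] at hcross
  rw [crossM_eq_η3_mulVec_cross, crossM_eq_η3_mulVec_cross, ← hcross, mulVec_mulVec,
    mulVec_mulVec, mul_η3_mul_transpose_of_isometry hv]

lemma mul_Mmap_mul_η3_transpose_η3 (p : Fin 3 → ℝ) :
    v * Mmap p * (η3 * vᵀ * η3) = Mmap (v *ᵥ p) := by
  refine ext_iff_mulVec.mpr fun q => ?_
  rw [← mulVec_mulVec, ← mulVec_mulVec, Mmap_mulVec, mulVec_crossM_of_isometry hv hdet,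
    mulVec_mulVec, mul_η3_transpose_η3_of_isometry hv, one_mulVec, Mmap_mulVec]

end Isometry

section Block

variable (v w X : Matrix (Fin 3) (Fin 3) ℝ) (x y b : Fin 3 → ℝ)

lemma pmat_mul_pmat : pmat v x * pmat w y = pmat (v * w) (v *ᵥ y + x) := by
  ext i j
  fin_cases i <;> fin_cases j <;>
    simp [pmat, Matrix.mul_apply, Matrix.mulVec, dotProduct, Fin.sum_univ_four, Fin.sum_univ_three]

lemma pmat_one_zero : pmat 1 0 = 1 := by
  ext i j
  fin_cases i <;> fin_cases j <;> simp [pmat, Matrix.one_apply, Fin.ext_iff]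

lemma pmat_mul_amat : pmat v x * amat X b = amat (v * X) (v *ᵥ b) := by
  ext i j
  fin_cases i <;> fin_cases j <;>
    simp [pmat, amat, Matrix.mul_apply, Matrix.mulVec, dotProduct, Fin.sum_univ_four,
      Fin.sum_univ_three]

lemma amat_mul_pmat : amat X b * pmat v x = amat (X * v) (X *ᵥ x + b) := by
  ext i j
  fin_cases i <;> fin_cases j <;>
    simp [pmat, amat, Matrix.mul_apply, Matrix.mulVec, dotProduct, Fin.sum_univ_four,
      Fin.sum_univ_three]

lemma smul_amat_add_smul_amat (c d : ℝ) (Y : Matrix (Fin 3) (Fin 3) ℝ) (e : Fin 3 → ℝ) :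
    c • amat X b + d • amat Y e = amat (c • X + d • Y) (c • b + d • e) := by
  ext i j
  simp only [amat, Matrix.add_apply, Matrix.smul_apply, of_apply]
  split_ifs <;> simp

variable {v w} (hvw : v * w = 1)
include hvw

lemma inv_pmat : (pmat v x)⁻¹ = pmat w (-(w *ᵥ x)) := by
  refine inv_eq_right_inv ?_
  rw [pmat_mul_pmat, hvw, mulVec_neg, mulVec_mulVec, hvw, one_mulVec, neg_add_cancel,
    pmat_one_zero]

lemma pmat_mul_amat_mul_inv_pmat :
    pmat v x * amat X b * (pmat v x)⁻¹ = amat (v * X * w) (v *ᵥ b - (v * X * w) *ᵥ x) := by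
  rw [inv_pmat x hvw, pmat_mul_amat, amat_mul_pmat, mulVec_neg, mulVec_mulVec, neg_add_eq_sub]

end Block

/-- equations (3.17)–(3.19): the coadjoint-orbit element
T = h(μJ₀ + sP₀)h⁻¹ of a particle of mass μ and spin s has momentum p⃗ = μ Ad(v)J₀
and angular momentum k⃗ = x⃗ ∧ p⃗ + s p̂, satisfying the mass and spin constraints. -/
theorem statement10 (v : Matrix (Fin 3) (Fin 3) ℝ) (hv : IsSOplus v)
    (x : Fin 3 → ℝ) (μ s : ℝ)
    (h : Matrix (Fin 4) (Fin 4) ℝ) (hh : h = pmat v x)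
    (p k : Fin 3 → ℝ) (hp : p = μ • (v *ᵥ e3 0))
    (hk : k = crossM x p + s • (v *ᵥ e3 0)) :
    h * (μ • Jhat 0 + s • Phat 0) * h⁻¹ = amat (Mmap p) k
    ∧ mink p p = μ ^ 2 ∧ mink p k = μ * s := by
  obtain ⟨hη, hdet, -⟩ := hv
  have hAd : v * Mmap (μ • e3 0) * (η3 * vᵀ * η3) = Mmap p := by
    rw [mul_Mmap_mul_η3_transpose_η3 hη hdet, mulVec_smul, hp]
  refine ⟨?_, ?_, ?_⟩
  · rw [hh, Jhat, Phat, smul_amat_add_smul_amat, smul_zero, smul_zero, add_zero, zero_add,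
      ← Mmap_smul, pmat_mul_amat_mul_inv_pmat _ _ _ (mul_η3_transpose_η3_of_isometry hη), hAd,
      Mmap_mulVec, sub_eq_add_neg, crossM_anticomm, mulVec_smul, add_comm, hk]
  · rw [hp, mink_smul_left, mink_smul_right, mink_mulVec_of_isometry hη, mink_e3_zero]
    ring
  · rw [hk, mink_add_right, mink_crossM_self, zero_add, mink_smul_right, hp, mink_smul_left,
      mink_mulVec_of_isometry hη, mink_e3_zero]
    ring
end
end
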